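/- arXiv:2206.03375 — 2 statements merged into one kernel-verified Lean document; each statement's English description precedes it below -/
import Mathlib

section
/- Let G be an r-regular graph with n vertices, m edges, and adjacency eigenvalues λ₁,...,λₙ. Then the multiset of eigenvalues of the adjacency matrix of T(G) is {-2 with multiplicity m - n} together with {λᵢ - 1 + r/2 ± sqrt(λᵢ + 1 + r²/4) : i = 1,...,n}, each with multiplicity 1 per index-sign pair (Cvetković's theorem). -/
open scoped Classical
open Matrix

/-- The incidence matrix of a simple graph `G`, with rows indexed by vertices and
columns indexed by edges: entry `(v, e)` is `1` if `v` is an endpoint of `e`, else `0`. -/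
noncomputable def incMat {V : Type*} (G : SimpleGraph V) : Matrix V G.edgeSet ℝ :=
  fun v e => if v ∈ (e : Sym2 V) then 1 else 0

/-- The total graph `T(G)` of a simple graph `G`: its vertices are the vertices and the
edges of `G`; two of them are adjacent iff the corresponding elements of `G` are
adjacent vertices, an incident vertex–edge pair, or edges sharing an endpoint. -/
def totalGraph {V : Type*} (G : SimpleGraph V) : SimpleGraph (V ⊕ G.edgeSet) where
  Adj x y :=
    match x, y with
    | Sum.inl u, Sum.inl v => G.Adj u v
    | Sum.inl u, Sum.inr e => u ∈ (e : Sym2 V)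
    | Sum.inr e, Sum.inl u => u ∈ (e : Sym2 V)
    | Sum.inr e, Sum.inr f => e ≠ f ∧ ∃ v, v ∈ (e : Sym2 V) ∧ v ∈ (f : Sym2 V)
  symm := by
    constructor
    rintro (u | e) (v | f) h
    · exact h.symm
    · exact h
    · exact h
    · obtain ⟨hne, v, hv1, hv2⟩ := h
      exact ⟨hne.symm, v, hv2, hv1⟩
  loopless := by
    constructor
    rintro (u | e) h
    · exact G.irrefl h
    · exact h.1 rfl

/-! The incidence matrix `R` satisfies `R Rᵀ = A + r` and `Rᵀ R = A_L + 2`, so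
`A_T + 2 = [[1, 0], [0, Rᵀ]] * [[A + 2, R], [1, R]]`. Multiplying the two factors in the other
order only removes the eigenvalue `-2`, `m - n` times, and leaves the `2n × 2n` matrix
`[[A, A + r], [1, A + r - 2]]`. Its blocks are polynomials in `A`, so its characteristic
polynomial is `∏ᵢ ((x - λᵢ) (x - λᵢ - r + 2) - (λᵢ + r))`. The quadratic factors have real roots
because `λᵢ ≥ -r`, as `A + r = R Rᵀ` is positive semidefinite. -/

open Polynomial Finset

namespace Matrix

variable {R : Type*} [CommRing R] {m n : Type*} [Fintype m] [Fintype n] [DecidableEq m]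
  [DecidableEq n]

theorem charpoly_mul_sub_scalar_of_card_le (P : Matrix m n R) (Q : Matrix n m R) (c : R)
    (hle : Fintype.card n ≤ Fintype.card m) :
    (P * Q - scalar m c).charpoly
      = (X + C c) ^ (Fintype.card m - Fintype.card n) * (Q * P - scalar n c).charpoly := by
  rw [charpoly_sub_scalar, charpoly_sub_scalar, charpoly_mul_comm_of_le P Q hle, mul_comp,
    pow_comp, X_comp]

theorem det_fromBlocks_of_commute (A B C D : Matrix n n R) (hCD : Commute C D)
    (hD : IsRegular D.det) : (fromBlocks A B C D).det = (A * D - B * C).det := by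
  have h : fromBlocks A B C D * fromBlocks D 0 (-C) 1 = fromBlocks (A * D - B * C) B 0 D := by
    simp [fromBlocks_multiply, hCD.eq, sub_eq_add_neg]
  have := congrArg det h
  rw [det_mul, det_fromBlocks_zero₁₂, det_fromBlocks_zero₂₁, det_one, mul_one] at this
  exact hD.right.eq_iff.mp this

theorem charpoly_fromBlocks_one₂₁ (A B D : Matrix n n R) :
    (fromBlocks A B 1 D).charpoly = (charmatrix A * charmatrix D - B.map C).det := by
  rw [charpoly, charmatrix_fromBlocks, Matrix.map_one _ (map_zero C) (map_one C),
    det_fromBlocks_of_commute _ _ _ _ (Commute.one_left _).neg_left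
      (charpoly_monic D).isRegular]
  simp

theorem fromBlocks_transpose_eq_mul_sub_scalar (A : Matrix m m R) (B : Matrix m n R)
    (D : Matrix n n R) (c : R) (hD : Bᵀ * B = D + scalar n c) :
    fromBlocks A B Bᵀ D
      = (fromBlocks 1 0 0 Bᵀ : Matrix (m ⊕ n) (m ⊕ m) R) * fromBlocks (A + scalar m c) B 1 B
        - scalar (m ⊕ n) c := by
  rw [fromBlocks_multiply]
  ext (i | i) (j | j) <;> simp [hD, scalar_apply, diagonal_apply]

theorem charpoly_fromBlocks_transpose (A : Matrix m m R) (B : Matrix m n R) (D : Matrix n n R)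
    (c : R) (hD : Bᵀ * B = D + scalar n c) (hle : Fintype.card m ≤ Fintype.card n) :
    (fromBlocks A B Bᵀ D).charpoly = (X + C c) ^ (Fintype.card n - Fintype.card m)
      * (fromBlocks A (B * Bᵀ) 1 (B * Bᵀ - scalar m c)).charpoly := by
  have hQP : fromBlocks (A + scalar m c) B 1 B
      * (fromBlocks 1 0 0 Bᵀ : Matrix (m ⊕ n) (m ⊕ m) R) - scalar (m ⊕ m) c = fromBlocks A (B * Bᵀ) 1 (B * Bᵀ - scalar m c) := by
    rw [fromBlocks_multiply]
    ext (i | i) (j | j) <;> simp [scalar_apply, diagonal_apply]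
  rw [fromBlocks_transpose_eq_mul_sub_scalar A B D c hD, charpoly_mul_sub_scalar_of_card_le _ _ _
    (by simp only [Fintype.card_sum]; omega), hQP]
  simp only [Fintype.card_sum]
  congr 2
  omega

theorem charpoly_eq_prod_X_sub_C_of_roots_eq [IsDomain R] (A : Matrix n n R) (lam : n → R)
    (h : A.charpoly.roots = univ.val.map lam) :
    A.charpoly = ∏ i, (X - C (lam i)) := by
  have hcard : Multiset.card A.charpoly.roots = A.charpoly.natDegree := by
    simp [h]
  rw [← prod_multiset_X_sub_C_of_monic_of_roots_card_eq A.charpoly_monic hcard, h,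
    Multiset.map_map]
  rfl

theorem det_scalar_sub_eq_prod {A : Matrix n n R} {lam : n → R}
    (hA : A.charpoly = ∏ i, (X - C (lam i))) (t : R) :
    (scalar n t - A).det = ∏ i, (t - lam i) := by
  rw [← eval_charpoly, hA, eval_prod]
  simp

theorem map_eval_charmatrix (M : Matrix n n R) (t : R) :
    (charmatrix M).map (eval t) = scalar n t - M := by
  ext i j
  by_cases h : i = j
  · subst h; simp
  · simp [h]

theorem det_mul_self_add_smul_add_scalar {A : Matrix n n ℝ} {lam : n → ℝ}
    (hA : A.charpoly = ∏ i, (X - C (lam i))) (b c : ℝ) (hbc : 4 * c ≤ b ^ 2) :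
    (A * A + b • A + scalar n c).det = ∏ i, (lam i ^ 2 + b * lam i + c) := by
  obtain ⟨α, β, hsum, hprod⟩ : ∃ α β : ℝ, α + β = -b ∧ α * β = c := by
    have hs := Real.sq_sqrt (by linarith : 0 ≤ b ^ 2 - 4 * c)
    exact ⟨(-b + √(b ^ 2 - 4 * c)) / 2, (-b - √(b ^ 2 - 4 * c)) / 2, by ring,
      by linear_combination (-1 / 4 : ℝ) * hs⟩
  have hfactor : A * A + b • A + scalar n c = (scalar n α - A) * (scalar n β - A) := by
    obtain rfl : b = -(α + β) := by linarith
    subst hprod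
    simp only [scalar_apply, ← smul_one_eq_diagonal, sub_mul, mul_sub, smul_mul_assoc,
      mul_smul_comm, Matrix.one_mul, Matrix.mul_one]
    module
  rw [hfactor, det_mul, det_scalar_sub_eq_prod hA, det_scalar_sub_eq_prod hA,
    ← prod_mul_distrib]
  refine prod_congr rfl fun i _ => ?_
  linear_combination (-lam i) * hsum + hprod

theorem charpoly_fromBlocks_add_scalar {A : Matrix n n ℝ} {lam : n → ℝ}
    (hA : A.charpoly = ∏ i, (X - C (lam i))) (b c : ℝ) :
    (fromBlocks A (A + scalar n b) 1 (A + scalar n c)).charpoly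
      = ∏ i, ((X - C (lam i)) * (X - C (lam i + c)) - C (lam i + b)) := by
  rw [charpoly_fromBlocks_one₂₁]
  -- for `x ≥ -b` the quadratic in `A` below has real roots
  refine eq_of_infinite_eval_eq _ _ ((Set.Ici_infinite (-b)).mono fun x hx => ?_)
  have hquad : (scalar n x - A) * (scalar n x - (A + scalar n c)) - (A + scalar n b)
      = A * A + (c - 2 * x - 1) • A + scalar n (x * (x - c) - b) := by
    simp only [scalar_apply, ← smul_one_eq_diagonal, sub_mul, mul_sub, smul_mul_assoc,
      mul_smul_comm, Matrix.one_mul, Matrix.mul_one, mul_add]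
    module
  rw [Set.mem_ofPred_eq, ← coe_evalRingHom, RingHom.map_det, map_sub, map_mul]
  simp only [RingHom.mapMatrix_apply, coe_evalRingHom, map_eval_charmatrix, map_map,
    Function.comp_def, eval_C, map_id']
  rw [hquad, det_mul_self_add_smul_add_scalar hA _ _
    (by nlinarith [Set.mem_Ici.mp hx, sq_nonneg (1 - c)]), eval_prod]
  refine prod_congr rfl fun i _ => ?_
  simp only [eval_sub, eval_mul, eval_X, eval_C]
  ring

end Matrix

theorem Matrix.nonneg_of_mem_roots_charpoly_mul_transpose {m n : Type*} [Fintype m] [Fintype n]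
    [DecidableEq m] (B : Matrix m n ℝ) {μ : ℝ}
    (hμ : μ ∈ (B * Bᵀ).charpoly.roots) : 0 ≤ μ := by
  rw [← conjTranspose_eq_transpose_of_trivial,
    (isHermitian_mul_conjTranspose_self B).roots_charpoly_eq_eigenvalues] at hμ
  obtain ⟨i, -, rfl⟩ := Multiset.mem_map.mp hμ
  exact eigenvalues_self_mul_conjTranspose_nonneg B i

theorem Polynomial.X_sub_C_mul_X_sub_C_sub_C_eq (l r : ℝ) (h : 0 ≤ l + 1 + r ^ 2 / 4) :
    (X - C l) * (X - C (l + (r - 2))) - C (l + r)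
      = (X - C (l - 1 + r / 2 + √(l + 1 + r ^ 2 / 4)))
        * (X - C (l - 1 + r / 2 - √(l + 1 + r ^ 2 / 4))) :=
  Polynomial.funext fun x => by
    simp only [eval_sub, eval_mul, eval_X, eval_C]
    linear_combination Real.sq_sqrt h

theorem Sym2.card_filter_mem_and_mem {V : Type*} [Fintype V] [DecidableEq V] {e f : Sym2 V}
    (hef : e ≠ f) :
    #{v | v ∈ e ∧ v ∈ f} = if ∃ v, v ∈ e ∧ v ∈ f then 1 else 0 := by
  split_ifs with h
  · obtain ⟨v, hve, hvf⟩ := h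
    refine card_eq_one.mpr ⟨v, eq_singleton_iff_unique_mem.mpr ⟨by simp [hve, hvf], ?_⟩⟩
    simp only [mem_filter, mem_univ, true_and, and_imp]
    intro w hwe hwf
    by_contra hwv
    exact hef (((Sym2.mem_and_mem_iff hwv).mp ⟨hwe, hve⟩).trans
      ((Sym2.mem_and_mem_iff hwv).mp ⟨hwf, hvf⟩).symm)
  · exact card_eq_zero.mpr (filter_eq_empty_iff.mpr fun v _ hv => h ⟨v, hv⟩)

section TotalGraph

variable {V : Type*} (G : SimpleGraph V)

theorem SimpleGraph.IsRegularOfDegree.two_mul_card_edgeSet [Fintype V] {r : ℕ}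
    (hreg : G.IsRegularOfDegree r) : 2 * Fintype.card G.edgeSet = Fintype.card V * r := by
  have h := G.sum_degrees_eq_twice_card_edges
  simp only [hreg.degree_eq, sum_const, card_univ, smul_eq_mul, G.edgeFinset_card] at h
  omega

variable [DecidableEq V]

theorem incMat_apply_eq_incMatrix (u : V) (e : G.edgeSet) :
    incMat G u e = G.incMatrix ℝ u e := by
  simp [incMat, SimpleGraph.incMatrix_apply', SimpleGraph.incidenceSet, e.2]

variable [Fintype V]

theorem incMat_mul_transpose {r : ℕ} (hreg : G.IsRegularOfDegree r) :
    incMat G * (incMat G)ᵀ = G.adjMatrix ℝ + scalar V (r : ℝ) := by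
  have h : incMat G * (incMat G)ᵀ = G.incMatrix ℝ * (G.incMatrix ℝ)ᵀ := by
    ext u v
    simp only [mul_apply, transpose_apply, incMat_apply_eq_incMatrix]
    rw [← sum_subtype G.edgeFinset (fun e => G.mem_edgeFinset)
      (fun e => G.incMatrix ℝ u e * G.incMatrix ℝ v e)]
    refine sum_subset (subset_univ _) fun e _ he => ?_
    rw [G.incMatrix_of_notMem_incidenceSet fun h => he (G.mem_edgeFinset.mpr h.1), zero_mul]
  rw [h, G.incMatrix_mul_transpose]
  ext u v
  by_cases huv : u = v
  · subst huv; simp [hreg u, Matrix.natCast_apply]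
  · simp [huv, SimpleGraph.adjMatrix_apply, Matrix.natCast_apply]

theorem incMat_transpose_mul :
    (incMat G)ᵀ * incMat G = G.lineGraph.adjMatrix ℝ + scalar G.edgeSet (2 : ℝ) := by
  ext e f
  have hcount :
      ((incMat G)ᵀ * incMat G) e f = #{v | v ∈ (e : Sym2 V) ∧ v ∈ (f : Sym2 V)} := by
    simp [mul_apply, incMat, ← ite_and, sum_boole, and_comm]
  rw [hcount]
  by_cases hef : e = f
  · subst hef
    have he :
        ({v | v ∈ (e : Sym2 V) ∧ v ∈ (e : Sym2 V)} : Finset V) = (e : Sym2 V).toFinset := by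
      ext v; simp [Sym2.mem_toFinset]
    rw [he, Sym2.card_toFinset_of_not_isDiag _ (G.not_isDiag_of_mem_edgeSet e.2)]
    simp
  · rw [Sym2.card_filter_mem_and_mem (Subtype.coe_injective.ne hef)]
    simp [SimpleGraph.adjMatrix_apply, SimpleGraph.lineGraph_adj_iff_exists, hef]

theorem totalGraph_adjMatrix :
    (totalGraph G).adjMatrix ℝ
      = fromBlocks (G.adjMatrix ℝ) (incMat G) (incMat G)ᵀ (G.lineGraph.adjMatrix ℝ) := by
  ext (u | e) (v | f) <;>
    simp only [SimpleGraph.adjMatrix_apply, fromBlocks_apply₁₁, fromBlocks_apply₁₂,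
      fromBlocks_apply₂₁, fromBlocks_apply₂₂, transpose_apply, incMat,
      SimpleGraph.lineGraph_adj_iff_exists] <;>
    congr 1

theorem neg_le_of_mem_roots_charpoly_adjMatrix {r : ℕ} (hreg : G.IsRegularOfDegree r) {μ : ℝ}
    (hμ : μ ∈ (G.adjMatrix ℝ).charpoly.roots) : -(r : ℝ) ≤ μ := by
  have hshift : G.adjMatrix ℝ = incMat G * (incMat G)ᵀ - scalar V (r : ℝ) := by
    rw [incMat_mul_transpose G hreg, add_sub_cancel_right]
  rw [hshift, charpoly_sub_scalar] at hμ
  have hroot : μ + r ∈ (incMat G * (incMat G)ᵀ).charpoly.roots := by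
    rw [mem_roots (incMat G * (incMat G)ᵀ).charpoly_monic.ne_zero]
    simpa [IsRoot, eval_comp] using (mem_roots'.mp hμ).2
  linarith [(incMat G).nonneg_of_mem_roots_charpoly_mul_transpose hroot]

end TotalGraph

theorem totalGraph_spectrum_general {V : Type*} [Fintype V] [DecidableEq V]
    (G : SimpleGraph V) (r : ℕ) (hr : 2 ≤ r)
    (hreg : G.IsRegularOfDegree r)
    (lam : V → ℝ)
    (hlam : (G.adjMatrix ℝ).charpoly.roots = Finset.univ.val.map lam) :
    ((totalGraph G).adjMatrix ℝ).charpoly.roots =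
      Multiset.replicate (Fintype.card G.edgeSet - Fintype.card V) (-2 : ℝ)
        + Finset.univ.val.map
            (fun v => lam v - 1 + r / 2 + Real.sqrt (lam v + 1 + (r : ℝ) ^ 2 / 4))
        + Finset.univ.val.map
            (fun v => lam v - 1 + r / 2 - Real.sqrt (lam v + 1 + (r : ℝ) ^ 2 / 4)) := by
  have hcard : Fintype.card V ≤ Fintype.card G.edgeSet := by
    nlinarith [hreg.two_mul_card_edgeSet]
  have hA := (G.adjMatrix ℝ).charpoly_eq_prod_X_sub_C_of_roots_eq lam hlam
  have hlam_ge (v : V) : -(r : ℝ) ≤ lam v :=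
    neg_le_of_mem_roots_charpoly_adjMatrix G hreg (hlam ▸ Multiset.mem_map_of_mem _ (mem_univ v))
  have hchar : ((totalGraph G).adjMatrix ℝ).charpoly
      = ((Multiset.replicate (Fintype.card G.edgeSet - Fintype.card V) (-2 : ℝ)
          + univ.val.map (fun v => lam v - 1 + r / 2 + √(lam v + 1 + (r : ℝ) ^ 2 / 4))
          + univ.val.map (fun v => lam v - 1 + r / 2 - √(lam v + 1 + (r : ℝ) ^ 2 / 4))).map
            fun a => X - C a).prod := by
    rw [totalGraph_adjMatrix, charpoly_fromBlocks_transpose _ _ _ _ (incMat_transpose_mul G) hcard,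
      incMat_mul_transpose G hreg, add_sub_assoc, ← map_sub, charpoly_fromBlocks_add_scalar hA]
    simp only [Multiset.map_add, Multiset.prod_add, Multiset.map_replicate,
      Multiset.prod_replicate, Multiset.map_map, Function.comp_def, ← prod_eq_multiset_prod,
      mul_assoc, ← prod_mul_distrib, map_neg, sub_neg_eq_add]
    congr 1
    refine prod_congr rfl fun v _ => X_sub_C_mul_X_sub_C_sub_C_eq _ _ ?_
    nlinarith [hlam_ge v, sq_nonneg ((r : ℝ) / 2 - 1)]
  rw [hchar, roots_multiset_prod_X_sub_C]

/-- **Cvetković.** Let `G` be a connected `r`-regular graph (`r ≥ 2`) with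
`n` vertices, `m` edges, and adjacency eigenvalues `λ v` (`v ∈ V`, listed with
multiplicity as the roots of the characteristic polynomial).  Then the multiset of
eigenvalues of the adjacency matrix of `T(G)` is `{-2}` with multiplicity `m - n`
together with `λ v - 1 + r/2 ± √(λ v + 1 + r²/4)` for each `v`, one for each
index–sign pair. -/
theorem totalGraph_spectrum {V : Type*} [Fintype V] [DecidableEq V]
    (G : SimpleGraph V) (r : ℕ) (hr : 2 ≤ r)
    (hreg : G.IsRegularOfDegree r) (hconn : G.Connected)
    (lam : V → ℝ)
    (hlam : (G.adjMatrix ℝ).charpoly.roots = Finset.univ.val.map lam) :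
    ((totalGraph G).adjMatrix ℝ).charpoly.roots =
      Multiset.replicate (Fintype.card G.edgeSet - Fintype.card V) (-2 : ℝ)
        + Finset.univ.val.map
            (fun v => lam v - 1 + r / 2 + Real.sqrt (lam v + 1 + (r : ℝ) ^ 2 / 4))
        + Finset.univ.val.map
            (fun v => lam v - 1 + r / 2 - Real.sqrt (lam v + 1 + (r : ℝ) ^ 2 / 4)) :=
  totalGraph_spectrum_general G r hr hreg lam hlam
end

section
/- For the complete bipartite graph K_{n,n} with parts {1,...,n} and {1',...,n'} and edge basis vectors |e_{i,j}⟩ (edge joining i and j'), the vectors w_{i,j} = sqrt(ij/(ij+i+j+1)) ∑_{k₂=1}^{j+1} ∑_{k₁=1}^{i+1} ((-i)^{δ(k₁,i+1)} (-j)^{δ(k₂,j+1)}/(ij)) |e_{k₁,k₂}⟩, for i,j ∈ {1,...,n-1}, form an orthonormal basis of the kernel of the incidence matrix of K_{n,n}. -/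
/-!
Each `w_{i,j}` is a scalar multiple of `u_{i+1} ⊗ u_{j+1}`, where `u_I = (1, …, 1, -I, 0, …, 0)`
(`I` ones) has coordinate sum zero and the `u_I` are pairwise orthogonal with `‖u_I‖² = I (I + 1)`.
Hence the `w_{i,j}` are orthonormal and lie in the kernel, whose equations say that all row and
column sums of an `n × n` array vanish. Such an array is determined by its upper-left
`(n-1) × (n-1)` block, so the kernel has dimension at most `(n-1)²`, and the `(n-1)²` independent
vectors `w_{i,j}` span it.
-/

open Matrix
open scoped Classical

/-- The incidence matrix of `K_{n,n}` with parts `{1,…,n}` and `{1',…,n'}`, where the edge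
joining `i` and `j'` is represented by the pair `(i, j) : Fin n × Fin n`. -/
def incKnn (n : ℕ) : Matrix (Fin n ⊕ Fin n) (Fin n × Fin n) ℝ := fun v e =>
  match v with
  | Sum.inl i => if i = e.1 then 1 else 0
  | Sum.inr j => if j = e.2 then 1 else 0

/-- The factor `(-I)^{δ(k,I+1)}` (with vertices `1, …, I+1` represented 0-based: value `1`
on indices `< I`, value `-I` on index `I`, and `0` beyond). -/
def kerFactor {n : ℕ} (I : ℕ) (a : Fin n) : ℝ :=
  if (a : ℕ) < I then 1 else if (a : ℕ) = I then -(I : ℝ) else 0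

/-- The vectors `w_{i,j} = √(h_{i,j}) ∑_{k₂=1}^{j+1} ∑_{k₁=1}^{i+1}
((-i)^{δ(k₁,i+1)} (-j)^{δ(k₂,j+1)} / (ij)) |e_{k₁,k₂}⟩` with
`h_{i,j} = ij/(ij+i+j+1)`, for `i, j ∈ {1, …, n-1}` (here `i, j : Fin (n-1)` with 1-based
values `i+1, j+1`). -/
noncomputable def wKnn {n : ℕ} (p : Fin (n - 1) × Fin (n - 1)) : Fin n × Fin n → ℝ :=
  fun e =>
    let I : ℕ := (p.1 : ℕ) + 1
    let J : ℕ := (p.2 : ℕ) + 1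
    Real.sqrt ((I * J : ℝ) / (I * J + I + J + 1)) *
      (kerFactor I e.1 * kerFactor J e.2 / ((I : ℝ) * J))

open Finset

section kerFactor

variable {n I I' : ℕ}

lemma kerFactor_eq (a : Fin n) :
    kerFactor I a = (if (a : ℕ) < I then 1 else 0) + (if (a : ℕ) = I then -(I : ℝ) else 0) := by
  unfold kerFactor
  split_ifs <;> first | ring1 | omega

lemma sum_ite_val_lt (hI : I ≤ n) : ∑ a : Fin n, (if (a : ℕ) < I then (1 : ℝ) else 0) = I := by
  rw [sum_boole, Fin.card_filter_val_lt, min_eq_right hI]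

lemma sum_ite_val_eq (hI : I < n) (c : ℝ) : ∑ a : Fin n, (if (a : ℕ) = I then c else 0) = c := by
  simpa [Fin.ext_iff] using Fintype.sum_ite_eq' (⟨I, hI⟩ : Fin n) (fun _ => c)

lemma sum_kerFactor (hI : I < n) : ∑ a : Fin n, kerFactor I a = 0 := by
  simp only [kerFactor_eq, sum_add_distrib, sum_ite_val_lt hI.le, sum_ite_val_eq hI, add_neg_cancel]

lemma kerFactor_dotProduct_kerFactor (hI : I < n) (hI' : I' < n) :
    (kerFactor I : Fin n → ℝ) ⬝ᵥ kerFactor I' = if I = I' then (I : ℝ) * (I + 1) else 0 := by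
  wlog hle : I ≤ I' generalizing I I'
  · rw [dotProduct_comm, this hI' hI (by omega), if_neg (by omega), if_neg (by omega)]
  rcases hle.lt_or_eq with hlt | rfl
  · -- `kerFactor I'` is `1` on the support of `kerFactor I`
    have hmul : ∀ a : Fin n, kerFactor I a * kerFactor I' a = kerFactor I a := by
      intro a
      unfold kerFactor
      split_ifs <;> first | ring1 | omega
    rw [if_neg hlt.ne, dotProduct, sum_congr rfl fun a _ => hmul a, sum_kerFactor hI]
  · have hsq : ∀ a : Fin n, kerFactor I a * kerFactor I a
        = (if (a : ℕ) < I then 1 else 0) + (if (a : ℕ) = I then (I : ℝ) * I else 0) := by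
      intro a
      unfold kerFactor
      split_ifs <;> first | ring1 | omega
    rw [if_pos rfl, dotProduct, sum_congr rfl fun a _ => hsq a, sum_add_distrib,
      sum_ite_val_lt hI.le, sum_ite_val_eq hI]
    ring

end kerFactor

def tensorVec {α β R : Type*} [Mul R] (u : α → R) (v : β → R) : α × β → R :=
  fun e => u e.1 * v e.2

lemma tensorVec_dotProduct_tensorVec {α β R : Type*} [Fintype α] [Fintype β] [CommSemiring R]
    (u u' : α → R) (v v' : β → R) :
    tensorVec u v ⬝ᵥ tensorVec u' v' = (u ⬝ᵥ u') * (v ⬝ᵥ v') := by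
  simp only [dotProduct, tensorVec, Fintype.sum_prod_type, sum_mul_sum]
  exact sum_congr rfl fun a _ => sum_congr rfl fun b _ => by ring

lemma linearIndependent_of_dotProduct_eq_ite {ι α R : Type*} [Fintype α] [CommRing R]
    [DecidableEq ι] {v : ι → α → R} (h : ∀ p q, v p ⬝ᵥ v q = if p = q then 1 else 0) :
    LinearIndependent R v := by
  refine linearIndependent_iff'.mpr fun s g hg i hi => ?_
  have := congrArg (· ⬝ᵥ v i) hg
  simpa [sum_dotProduct, h, hi] using this

section incKnn

variable {n : ℕ}

lemma incKnn_mulVec_inl (y : Fin n × Fin n → ℝ) (i : Fin n) :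
    (incKnn n *ᵥ y) (Sum.inl i) = ∑ b, y (i, b) := by
  simp only [mulVec, dotProduct, incKnn, Fintype.sum_prod_type, ite_mul, one_mul, zero_mul]
  rw [sum_comm]
  simp

lemma incKnn_mulVec_inr (y : Fin n × Fin n → ℝ) (j : Fin n) :
    (incKnn n *ᵥ y) (Sum.inr j) = ∑ a, y (a, j) := by
  simp [mulVec, dotProduct, incKnn, Fintype.sum_prod_type]

lemma incKnn_mulVec_tensorVec {u v : Fin n → ℝ} (hu : ∑ a, u a = 0) (hv : ∑ b, v b = 0) :
    incKnn n *ᵥ tensorVec u v = 0 := by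
  funext x
  cases x <;> simp [incKnn_mulVec_inl, incKnn_mulVec_inr, tensorVec, ← mul_sum, ← sum_mul, hu, hv]

lemma eq_zero_of_incKnn_mulVec_eq_zero {m : ℕ} {y : Fin (m + 1) × Fin (m + 1) → ℝ}
    (hy : incKnn (m + 1) *ᵥ y = 0) (h : ∀ a b : Fin m, y (a.castSucc, b.castSucc) = 0) :
    y = 0 := by
  have hrow : ∀ a : Fin m, ∀ z, y (a.castSucc, z) = 0 := by
    intro a z
    induction z using Fin.lastCases with
    | cast b => exact h a b
    | last => simpa [incKnn_mulVec_inl, Fin.sum_univ_castSucc, h] using congrFun hy (.inl a.castSucc)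
  funext ⟨x, z⟩
  induction x using Fin.lastCases with
  | cast a => exact hrow a z
  | last => simpa [incKnn_mulVec_inr, Fin.sum_univ_castSucc, hrow] using congrFun hy (.inr z)

lemma finrank_ker_incKnn_le (n : ℕ) :
    Module.finrank ℝ (LinearMap.ker (incKnn n).mulVecLin) ≤ (n - 1) * (n - 1) := by
  cases n with
  | zero => simpa using Submodule.finrank_le (LinearMap.ker (incKnn 0).mulVecLin)
  | succ m =>
    let restrict := LinearMap.funLeft ℝ ℝ (Prod.map (Fin.castSucc (n := m)) Fin.castSucc)
      ∘ₗ (LinearMap.ker (incKnn (m + 1)).mulVecLin).subtype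
    have hinj : Function.Injective restrict := by
      refine (injective_iff_map_eq_zero restrict).mpr fun y hy => ?_
      exact Subtype.ext (eq_zero_of_incKnn_mulVec_eq_zero y.2 fun a b => congrFun hy (a, b))
    simpa using LinearMap.finrank_le_finrank_of_injective hinj

end incKnn

noncomputable def wKnnScale (I J : ℕ) : ℝ :=
  Real.sqrt ((I * J : ℝ) / (I * J + I + J + 1)) / (I * J)

lemma wKnnScale_sq_mul {I J : ℕ} (hI : 0 < I) (hJ : 0 < J) :
    wKnnScale I J ^ 2 * ((I * (I + 1)) * (J * (J + 1))) = 1 := by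
  have hden : (0 : ℝ) < I * J + I + J + 1 := by positivity
  rw [wKnnScale, div_pow, Real.sq_sqrt (by positivity)]
  field_simp
  ring

section wKnn

variable {n : ℕ}

lemma wKnn_eq_smul_tensorVec (p : Fin (n - 1) × Fin (n - 1)) :
    wKnn p = wKnnScale (p.1 + 1) (p.2 + 1) •
      tensorVec (kerFactor (p.1 + 1)) (kerFactor (p.2 + 1)) := by
  funext e
  simp only [wKnn, wKnnScale, tensorVec, Pi.smul_apply, smul_eq_mul]
  push_cast
  ring

lemma wKnn_dotProduct_wKnn (p q : Fin (n - 1) × Fin (n - 1)) :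
    wKnn p ⬝ᵥ wKnn q = if p = q then 1 else 0 := by
  have hlt : ∀ a : Fin (n - 1), (a : ℕ) + 1 < n := fun a => by omega
  rw [wKnn_eq_smul_tensorVec, wKnn_eq_smul_tensorVec, smul_dotProduct, dotProduct_smul,
    tensorVec_dotProduct_tensorVec, kerFactor_dotProduct_kerFactor (hlt _) (hlt _),
    kerFactor_dotProduct_kerFactor (hlt _) (hlt _)]
  by_cases hpq : p = q
  · subst hpq
    simp only [if_true, smul_eq_mul]
    linear_combination wKnnScale_sq_mul (I := p.1 + 1) (J := p.2 + 1) (by omega) (by omega)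
  · obtain h | h : (p.1 : ℕ) ≠ q.1 ∨ (p.2 : ℕ) ≠ q.2 := by
      rw [← not_and_or, ← Fin.ext_iff, ← Fin.ext_iff, ← Prod.ext_iff]
      exact hpq
    all_goals simp [h, hpq]

lemma incKnn_mulVec_wKnn (p : Fin (n - 1) × Fin (n - 1)) : incKnn n *ᵥ wKnn p = 0 := by
  rw [wKnn_eq_smul_tensorVec, mulVec_smul,
    incKnn_mulVec_tensorVec (sum_kerFactor (by omega)) (sum_kerFactor (by omega)), smul_zero]

end wKnn

/-- The vectors `w_{i,j}`, `i, j ∈ {1, …, n-1}`, form an orthonormal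
basis of the kernel of the incidence matrix of `K_{n,n}`: they are orthonormal, each lies
in the kernel, and they span the kernel. -/
theorem wKnn_orthonormal_basis_kernel (n : ℕ) :
    (∀ p q : Fin (n - 1) × Fin (n - 1),
        wKnn (n := n) p ⬝ᵥ wKnn (n := n) q = if p = q then 1 else 0) ∧
    (∀ p : Fin (n - 1) × Fin (n - 1), incKnn n *ᵥ wKnn p = 0) ∧
    (∀ y : Fin n × Fin n → ℝ, incKnn n *ᵥ y = 0 →
        y ∈ Submodule.span ℝ (Set.range (wKnn (n := n)))) := by
  refine ⟨wKnn_dotProduct_wKnn, incKnn_mulVec_wKnn, fun y hy => ?_⟩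
  have hle : Submodule.span ℝ (Set.range (wKnn (n := n))) ≤ LinearMap.ker (incKnn n).mulVecLin :=
    Submodule.span_le.mpr <| Set.range_subset_iff.mpr incKnn_mulVec_wKnn
  have hspan := Submodule.eq_of_le_of_finrank_le hle <| by
    rw [finrank_span_eq_card (linearIndependent_of_dotProduct_eq_ite wKnn_dotProduct_wKnn)]
    simpa using finrank_ker_incKnn_le n
  rw [hspan]
  exact hy
end
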